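/- Let A ∈ ℝ^{m×n} have nonnegative entries a_{ij}, let p ∈ ℝ^m, u ∈ ℝ^n, λ > 0, α ∈ ℝ, and let S ⊆ {1,…,m}. Form the augmented matrix Ã = [I_m √(2λ)A] ∈ ℝ^{m×(m+n)} and right-hand side p̃ = √(2λ)(p − Au) ∈ ℝ^m, and assume all row sums Σ_k ã_{ik} and all column sums Σ_{i∈S} ã_{ij} appearing below are nonzero. Then the SART update applied to (Ã, p̃) at x̃ = (y, z), namely x̃_j⁺ = x̃_j + α (Σ_{i∈S} ((p̃_i − Σ_k ã_{ik} x̃_k)/(Σ_k ã_{ik})) ã_{ij}) / (Σ_{i∈S} ã_{ij}), expressed in the variables y and x = z + u, equals: y_i⁺ = y_i + α (√(2λ)p_i − √(2λ)(Ax)_i − y_i)/(√(2λ)Σ_k a_{ik} + 1) for i ∈ S (with y_i unchanged for i ∉ S), and x_j⁺ = x_j + α (Σ_{i∈S} ((√(2λ)p_i − √(2λ)(Ax)_i − y_i)/(√(2λ)Σ_k a_{ik} + 1)) √(2λ)a_{ij}) / (√(2λ)Σ_{i∈S} a_{ij}) for j = 1,…,n. -/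

import Mathlib

open Finset

/-- The augmented matrix `Ã = [I_m  √(2λ)A] ∈ ℝ^{m×(m+n)}`. -/
noncomputable def sartAugMatrix {m n : ℕ} (A : Matrix (Fin m) (Fin n) ℝ) (lam : ℝ) :
    Matrix (Fin m) (Fin m ⊕ Fin n) ℝ :=
  fun i => Sum.elim (fun k => if i = k then (1 : ℝ) else 0)
    (fun j => Real.sqrt (2 * lam) * A i j)

/-- The augmented right-hand side `p̃ = √(2λ)(p − Au)`. -/
noncomputable def sartAugRhs {m n : ℕ} (A : Matrix (Fin m) (Fin n) ℝ)
    (p : Fin m → ℝ) (u : Fin n → ℝ) (lam : ℝ) : Fin m → ℝ :=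
  fun i => Real.sqrt (2 * lam) * (p i - A.mulVec u i)

/-- One SART update with subset `S` and relaxation `α` applied to the system `(B, q)`:
`x_j⁺ = x_j + α (Σ_{i∈S} ((q_i − Σ_k b_{ik} x_k)/(Σ_k b_{ik})) b_{ij}) / (Σ_{i∈S} b_{ij})`. -/
noncomputable def sartStep {m : ℕ} {ι : Type*} [Fintype ι]
    (B : Matrix (Fin m) ι ℝ) (q : Fin m → ℝ) (S : Finset (Fin m)) (α : ℝ)
    (x : ι → ℝ) : ι → ℝ :=
  fun j => x j +
    α * (∑ i ∈ S, ((q i - ∑ k, B i k * x k) / (∑ k, B i k)) * B i j) / (∑ i ∈ S, B i j)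

/-!
The augmented matrix is `[I  √(2λ)A]`. Against a block matrix `[I B]` the SART quantities split:
row `i` sums to `1 + Σ_k b_ik` and acts on `(y, z)` as `y_i + (Bz)_i`, while the column sums over
`S` are `1` or `0` on the identity block and `Σ_{i∈S} b_ij` on the `B` block. With `B = √(2λ)A`
and `z = x − u`, the `Au` terms of `p̃ = √(2λ)(p − Au)` cancel against `√(2λ)A(x − u)`.
-/

open Matrix

namespace Matrix

variable {m : ℕ} {ι : Type*} [Fintype ι] (B : Matrix (Fin m) ι ℝ)

theorem sum_fromCols_one_apply (i : Fin m) :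
    ∑ k, fromCols (1 : Matrix (Fin m) (Fin m) ℝ) B i k = 1 + ∑ k, B i k := by
  simp [Fintype.sum_sum_type, one_apply]

theorem sum_fromCols_one_mul_sumElim (y : Fin m → ℝ) (z : ι → ℝ) (i : Fin m) :
    ∑ k, fromCols (1 : Matrix (Fin m) (Fin m) ℝ) B i k * Sum.elim y z k = y i + (B *ᵥ z) i := by
  simpa [mulVec, dotProduct] using congrFun (fromCols_mulVec_sumElim 1 B y z) i

end Matrix

section FromColsOne

variable {m : ℕ} {ι : Type*} [Fintype ι] (B : Matrix (Fin m) ι ℝ) (q : Fin m → ℝ)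
  (S : Finset (Fin m)) (α : ℝ) (y : Fin m → ℝ) (z : ι → ℝ)

theorem sartStep_fromCols_one (k : Fin m ⊕ ι) :
    sartStep (fromCols 1 B) q S α (Sum.elim y z) k =
      Sum.elim y z k + α * (∑ i ∈ S, ((q i - y i - (B *ᵥ z) i) / (1 + ∑ k, B i k)) *
        fromCols 1 B i k) / ∑ i ∈ S, fromCols 1 B i k := by
  simp only [sartStep, sum_fromCols_one_apply, sum_fromCols_one_mul_sumElim, sub_sub]

theorem sartStep_fromCols_one_inl_of_mem {i : Fin m} (hi : i ∈ S) :
    sartStep (fromCols 1 B) q S α (Sum.elim y z) (Sum.inl i) =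
      y i + α * ((q i - y i - (B *ᵥ z) i) / (1 + ∑ k, B i k)) := by
  simp [sartStep_fromCols_one, one_apply, hi]

/-- The SART correction is then `α * 0 / 0`, which is `0` under Lean's division. -/
theorem sartStep_fromCols_one_inl_of_notMem {i : Fin m} (hi : i ∉ S) :
    sartStep (fromCols 1 B) q S α (Sum.elim y z) (Sum.inl i) = y i := by
  simp [sartStep_fromCols_one, one_apply, hi]

theorem sartStep_fromCols_one_inr (j : ι) :
    sartStep (fromCols 1 B) q S α (Sum.elim y z) (Sum.inr j) =
      z j + α * (∑ i ∈ S, ((q i - y i - (B *ᵥ z) i) / (1 + ∑ k, B i k)) * B i j) /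
        ∑ i ∈ S, B i j :=
  sartStep_fromCols_one B q S α y z (Sum.inr j)

end FromColsOne

theorem sartAugMatrix_eq_fromCols {m n : ℕ} (A : Matrix (Fin m) (Fin n) ℝ) (lam : ℝ) :
    sartAugMatrix A lam = fromCols 1 (Real.sqrt (2 * lam) • A) := by
  ext i (k | j) <;> simp [sartAugMatrix, one_apply]

theorem sart_prox_update_general
    (m n : ℕ) (A : Matrix (Fin m) (Fin n) ℝ) (p : Fin m → ℝ) (u : Fin n → ℝ)
    (lam α : ℝ) (S : Finset (Fin m))
    (y : Fin m → ℝ) (x : Fin n → ℝ) :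
    (∀ i ∈ S,
        sartStep (sartAugMatrix A lam) (sartAugRhs A p u lam) S α
            (Sum.elim y (fun j => x j - u j)) (Sum.inl i) =
          y i + α * (Real.sqrt (2 * lam) * p i - Real.sqrt (2 * lam) * A.mulVec x i - y i) /
            (Real.sqrt (2 * lam) * (∑ k, A i k) + 1)) ∧
    (∀ i ∉ S,
        sartStep (sartAugMatrix A lam) (sartAugRhs A p u lam) S α
            (Sum.elim y (fun j => x j - u j)) (Sum.inl i) = y i) ∧
    (∀ j : Fin n,
        sartStep (sartAugMatrix A lam) (sartAugRhs A p u lam) S α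
            (Sum.elim y (fun j => x j - u j)) (Sum.inr j) + u j =
          x j + α * (∑ i ∈ S,
              ((Real.sqrt (2 * lam) * p i - Real.sqrt (2 * lam) * A.mulVec x i - y i) /
                  (Real.sqrt (2 * lam) * (∑ k, A i k) + 1)) *
                (Real.sqrt (2 * lam) * A i j)) /
            (Real.sqrt (2 * lam) * ∑ i ∈ S, A i j)) := by
  have hresidual : ∀ i, (sartAugRhs A p u lam i - y i -
        (Real.sqrt (2 * lam) • A).mulVec (fun j => x j - u j) i) /
        (1 + ∑ k, (Real.sqrt (2 * lam) • A) i k) =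
      (Real.sqrt (2 * lam) * p i - Real.sqrt (2 * lam) * A.mulVec x i - y i) /
        (Real.sqrt (2 * lam) * ∑ k, A i k + 1) := by
    intro i
    rw [← Pi.sub_def, Matrix.smul_mulVec, Matrix.mulVec_sub]
    simp only [sartAugRhs, Pi.smul_apply, Pi.sub_apply, Matrix.smul_apply, smul_eq_mul, ← mul_sum]
    ring
  rw [sartAugMatrix_eq_fromCols]
  refine ⟨fun i hi => ?_, fun i hi => sartStep_fromCols_one_inl_of_notMem _ _ _ _ _ _ hi,
    fun j => ?_⟩
  · rw [sartStep_fromCols_one_inl_of_mem _ _ _ _ _ _ hi, hresidual, mul_div_assoc]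
  · rw [sartStep_fromCols_one_inr]
    simp only [hresidual]
    simp only [Matrix.smul_apply, smul_eq_mul, ← mul_sum]
    ring

/-- The SART update applied to the augmented system
`[I √(2λ)A]·(y, z) = √(2λ)(p − Au)` at `x̃ = (y, z)` with `z = x − u`, expressed in the
variables `y` and `x = z + u`, gives the stated SART proximal update formulas. -/
theorem sart_prox_update
    (m n : ℕ) (A : Matrix (Fin m) (Fin n) ℝ) (p : Fin m → ℝ) (u : Fin n → ℝ)
    (lam α : ℝ) (hlam : 0 < lam) (hA : ∀ i j, 0 ≤ A i j) (S : Finset (Fin m))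
    (hrow : ∀ i, (∑ k, sartAugMatrix A lam i k) ≠ 0)
    (hcol : ∀ j : Fin n, (∑ i ∈ S, sartAugMatrix A lam i (Sum.inr j)) ≠ 0)
    (y : Fin m → ℝ) (x : Fin n → ℝ) :
    (∀ i ∈ S,
        sartStep (sartAugMatrix A lam) (sartAugRhs A p u lam) S α
            (Sum.elim y (fun j => x j - u j)) (Sum.inl i) =
          y i + α * (Real.sqrt (2 * lam) * p i - Real.sqrt (2 * lam) * A.mulVec x i - y i) /
            (Real.sqrt (2 * lam) * (∑ k, A i k) + 1)) ∧
    (∀ i ∉ S,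
        sartStep (sartAugMatrix A lam) (sartAugRhs A p u lam) S α
            (Sum.elim y (fun j => x j - u j)) (Sum.inl i) = y i) ∧
    (∀ j : Fin n,
        sartStep (sartAugMatrix A lam) (sartAugRhs A p u lam) S α
            (Sum.elim y (fun j => x j - u j)) (Sum.inr j) + u j =
          x j + α * (∑ i ∈ S,
              ((Real.sqrt (2 * lam) * p i - Real.sqrt (2 * lam) * A.mulVec x i - y i) /
                  (Real.sqrt (2 * lam) * (∑ k, A i k) + 1)) *
                (Real.sqrt (2 * lam) * A i j)) /
            (Real.sqrt (2 * lam) * ∑ i ∈ S, A i j)) :=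
  sart_prox_update_general m n A p u lam α S y x
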